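/- arXiv:2105.11568 — 2 statements merged into one kernel-verified Lean document; each statement's English description precedes it below -/
import Mathlib

section
/- For n = 2 and k ≥ 2, the (k+1)×2k presenting matrix M, whose rows are indexed by the multisets 0^{k−r}1^r (0 ≤ r ≤ k) and whose (r, (j,i)) entry is g_i(T^j x) as above, has rank k+1 (its rows are linearly independent). -/
/-- `T` swaps `0 ↔ 1` in every element of the multiset. -/
def Tmap (x : Multiset (Fin 2)) : Multiset (Fin 2) :=
  x.map (· + 1)

/-- `gstat i x` is the `i`-th smallest element of `x` (1-based), as a real number. -/
def gstat (i : ℕ) (x : Multiset (Fin 2)) : ℝ :=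
  ((((x.sort (· ≤ ·)).getD (i - 1) 0 : Fin 2) : ℕ) : ℝ)

/-- The multiset `0^{k-r} 1^r`. -/
def ms (k r : ℕ) : Multiset (Fin 2) :=
  Multiset.replicate (k - r) 0 + Multiset.replicate r 1

/-- The presenting matrix: rows indexed by the multisets `0^{k-r}1^r` (`0 ≤ r ≤ k`),
columns by pairs `(j, i)`, with entry `g_i(T^j x)`. -/
def presM (k : ℕ) : Matrix (Fin (k + 1)) (Fin 2 × Fin k) ℝ :=
  fun r p => gstat (p.2.val + 1) (Tmap^[p.1.val] (ms k r.val))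

/-! In row `0^{k-r}1^r` one has `g_i(x) = [i > k - r]` and `g_i(Tx) = [i > r]`. Hence the column
`g_1 ∘ T` is nonzero only in row `r = 0`, while for `1 ≤ c ≤ k` the column `g_{k-c+1}` is nonzero
exactly in the rows `r ≥ c`. These `k + 1` columns form a unit lower triangular submatrix. -/

lemma sort_ms (k r : ℕ) :
    (ms k r).sort (· ≤ ·) = List.replicate (k - r) 0 ++ List.replicate r 1 := by
  refine List.Perm.eq_of_pairwise' (Multiset.pairwise_sort _ _) ?_ ?_
  · rw [List.pairwise_append]
    exact ⟨List.pairwise_replicate.2 (Or.inr le_rfl), List.pairwise_replicate.2 (Or.inr le_rfl),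
      fun a ha b hb => by rw [List.eq_of_mem_replicate ha, List.eq_of_mem_replicate hb]; decide⟩
  · rw [← Multiset.coe_eq_coe, Multiset.sort_eq]
    simp [ms, ← Multiset.coe_add, ← Multiset.coe_replicate]

lemma gstat_succ_ms {k i : ℕ} (r : ℕ) (hi : i < k) :
    gstat (i + 1) (ms k r) = if k - r ≤ i then 1 else 0 := by
  rw [gstat, Nat.add_sub_cancel, sort_ms, List.getD_eq_getElem?_getD, List.getElem?_append,
    List.length_replicate]
  split_ifs with h₁ h₂ h₂
  · omega
  · simp [h₁]
  · simp [show i - (k - r) < r by omega]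
  · omega

lemma Tmap_ms {k r : ℕ} (h : r ≤ k) : Tmap (ms k r) = ms k (k - r) := by
  rw [Tmap, ms, ms, Multiset.map_add, Multiset.map_replicate, Multiset.map_replicate,
    Nat.sub_sub_self h, add_comm]
  rfl

lemma presM_apply_zero {k : ℕ} (r : Fin (k + 1)) (i : Fin k) :
    presM k r (0, i) = if k - r ≤ i then 1 else 0 :=
  gstat_succ_ms _ i.isLt

lemma presM_apply_one {k : ℕ} (r : Fin (k + 1)) (i : Fin k) :
    presM k r (1, i) = if r ≤ i.val then 1 else 0 := by
  simp only [presM, Fin.val_one, Function.iterate_one, Tmap_ms (Nat.le_of_lt_succ r.isLt),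
    gstat_succ_ms _ i.isLt, Nat.sub_sub_self (Nat.le_of_lt_succ r.isLt)]

theorem Matrix.card_le_rank_of_isLowerTriangular_submatrix {m n p R : Type*} [Fintype n]
    [Fintype p] [LinearOrder p] [Field R] (A : Matrix m n R) (r : p → m) (c : p → n)
    (hA : (A.submatrix r c).IsLowerTriangular) (hd : ∀ i, A (r i) (c i) ≠ 0) :
    Fintype.card p ≤ A.rank := by
  classical
  have hfull : (A.submatrix r c).rank = Fintype.card p := by
    simpa using rank_mul_eq_right_of_isLowerTriangular _ (1 : Matrix p p R) hA hd
  exact hfull ▸ A.rank_submatrix_le r c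

def pivotCol (k : ℕ) [NeZero k] (c : Fin (k + 1)) : Fin 2 × Fin k :=
  if h : c = 0 then (1, 0) else (0, ⟨k - c, Nat.sub_lt (NeZero.pos k) (Fin.pos_iff_ne_zero.2 h)⟩)

lemma presM_pivotCol_isLowerTriangular (k : ℕ) [NeZero k] :
    ((presM k).submatrix id (pivotCol k)).IsLowerTriangular := by
  intro r c (hrc : r < c)
  have hc : c ≠ 0 := (Fin.zero_le r).trans_lt hrc |>.ne'
  simp only [Matrix.submatrix_apply, id, pivotCol, dif_neg hc, presM_apply_zero]
  exact if_neg (by omega)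

lemma presM_pivotCol_diag (k : ℕ) [NeZero k] (c : Fin (k + 1)) : presM k c (pivotCol k c) = 1 := by
  by_cases hc : c = 0
  · simp [pivotCol, hc, presM_apply_one]
  · simp only [pivotCol, dif_neg hc, presM_apply_zero]
    exact if_pos le_rfl

theorem stmt_14 (k : ℕ) (hk : 2 ≤ k) : (presM k).rank = k + 1 := by
  have : NeZero k := ⟨by omega⟩
  have hlower := (presM k).card_le_rank_of_isLowerTriangular_submatrix id (pivotCol k)
    (presM_pivotCol_isLowerTriangular k) fun c => by
      rw [id, presM_pivotCol_diag]
      exact one_ne_zero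
  rw [Fintype.card_fin] at hlower
  exact le_antisymm ((presM k).rank_le_card_height.trans_eq (Fintype.card_fin _)) hlower
end

section
/- Let X be the set of k-element multisets with elements in {0,...,n−1} for n > 2, T rotation by +1 mod n, and U the induced time-evolution operator on the dynamical span V of g_1,...,g_k (g_i = i-th smallest element). For every n-th root of unity ζ ≠ 1, the eigenvalue ζ of U has multiplicity exactly k, and the eigenvalue 1 has multiplicity ⌊k/2⌋ + 1. -/
/-- `X` is the set of `k`-element multisets with elements in `{0, ..., n-1}`. -/
abbrev XX (n k : ℕ) [NeZero n] := {x : Multiset (Fin n) // Multiset.card x = k}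

/-- `T` increments every element by 1 mod n. -/
def Tk (n k : ℕ) [NeZero n] (x : XX n k) : XX n k :=
  ⟨x.1.map (· + 1), by simp [x.2]⟩

/-- `gst n k i x` is the `i`-th smallest element of `x` (1-based), as a complex number. -/
def gst (n k : ℕ) [NeZero n] (i : ℕ) (x : XX n k) : ℂ :=
  ((((x.1.sort (· ≤ ·)).getD (i - 1) 0 : Fin n) : ℕ) : ℂ)

/-- The time-evolution operator `U f = f ∘ T` on the space of all functions `X → ℂ`. -/
def Ubig (n k : ℕ) [NeZero n] : Module.End ℂ (XX n k → ℂ) where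
  toFun f := f ∘ Tk n k
  map_add' := by intros; rfl
  map_smul' := by intros; rfl

/-- `V` is the span of the functions `g_i ∘ T^j` for `1 ≤ i ≤ k`, `0 ≤ j < n`. -/
noncomputable def Vspan (n k : ℕ) [NeZero n] : Submodule ℂ (XX n k → ℂ) :=
  Submodule.span ℂ
    {f | ∃ i : Fin k, ∃ j : Fin n, f = fun x => gst n k (i.val + 1) ((Tk n k)^[j.val] x)}

/-!
If `U ^ n = 1` and `ζ ^ n = 1`, the operator `∑ j, ζ⁻¹ ^ j • U ^ j` is `n` times the projection
onto the `ζ`-eigenspace of `U`, and it sends `U ^ j g_i` to `ζ ^ j` times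
`F_i = ∑ j, ζ⁻¹ ^ j • g_i ∘ T ^ j`; hence `V ∩ ker (U - ζ)` is spanned by `F_1, …, F_k`.

On the configurations with `k - m` zeros and `m` ones, the difference between consecutive values
of `F_i` vanishes unless `i = m` or `i = k + 1 - m`, where it is `-(n - 1) ζ` and
`∑ j, ζ⁻¹ ^ j - ζ`. For `ζ ≠ 1` the geometric sum vanishes and `(n - 1) ^ 2 ≠ 1` makes the
`F_i` independent. For `ζ = 1`, writing the `i`-th smallest entry as the number of `c ∈ (0, n)`
with fewer than `i` entries below `c`, and pairing each arc of the circle with its complement,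
gives `F_i + F_(k+1-i) = n (n - 1)`; so `F_1, …, F_⌊k/2⌋` and the constants form a basis.
-/

open Finset Fin.NatCast

namespace Module.End

variable {K W ι : Type*} [Field K] [AddCommGroup W] [Module K W]

/-- For `U ^ n = 1` and `ζ ^ n = 1`, this is `n` times the projection onto the `ζ`-eigenspace. -/
def twistedOrbitSum (U : End K W) (n : ℕ) (ζ : K) : End K W :=
  ∑ j ∈ range n, ζ⁻¹ ^ j • U ^ j

variable {U : End K W} {n : ℕ} {ζ : K}

lemma pow_apply_of_mem_eigenspace {f : W} (hf : f ∈ U.eigenspace ζ) (j : ℕ) :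
    (U ^ j) f = ζ ^ j • f := by
  induction j with
  | zero => simp
  | succ j ih =>
    rw [pow_succ', mul_apply, ih, map_smul, mem_eigenspace_iff.1 hf, smul_smul, ← pow_succ]

lemma mul_twistedOrbitSum (hU : U ^ n = 1) (hζ : ζ ^ n = 1) :
    U * U.twistedOrbitSum n ζ = ζ • U.twistedOrbitSum n ζ := by
  rcases eq_or_ne n 0 with rfl | hn
  · simp [twistedOrbitSum]
  have hζ0 : ζ ≠ 0 := by rintro rfl; simp [hn] at hζ
  have htelescope := sum_range_sub (fun j => ζ⁻¹ ^ j • U ^ j) n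
  rw [inv_pow, hζ, hU, inv_one, one_smul, pow_zero, pow_zero, one_smul, sub_self] at htelescope
  rw [twistedOrbitSum, mul_sum, smul_sum, ← sub_eq_zero, ← sum_sub_distrib, ← smul_zero ζ,
    ← htelescope, smul_sum]
  refine sum_congr rfl fun j _ => ?_
  rw [mul_smul_comm, smul_sub, smul_smul, smul_smul, pow_succ, pow_succ',
    show ζ * (ζ⁻¹ ^ j * ζ⁻¹) = ζ⁻¹ ^ j by field_simp]

lemma twistedOrbitSum_mem_eigenspace (hU : U ^ n = 1) (hζ : ζ ^ n = 1) (g : W) :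
    U.twistedOrbitSum n ζ g ∈ U.eigenspace ζ :=
  mem_eigenspace_iff.2 <| by rw [← mul_apply, mul_twistedOrbitSum hU hζ, LinearMap.smul_apply]

lemma twistedOrbitSum_apply_of_mem_eigenspace (hζ : ζ ^ n = 1) {f : W}
    (hf : f ∈ U.eigenspace ζ) : U.twistedOrbitSum n ζ f = (n : K) • f := by
  rcases eq_or_ne n 0 with rfl | hn
  · simp [twistedOrbitSum]
  have hζ0 : ζ ≠ 0 := by rintro rfl; simp [hn] at hζ
  simp only [twistedOrbitSum, LinearMap.sum_apply, LinearMap.smul_apply,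
    pow_apply_of_mem_eigenspace hf, smul_smul, ← mul_pow, inv_mul_cancel₀ hζ0, one_pow, one_smul,
    sum_const, card_range, Nat.cast_smul_eq_nsmul]

lemma twistedOrbitSum_pow_apply (hU : U ^ n = 1) (hζ : ζ ^ n = 1) (g : W) (j : ℕ) :
    U.twistedOrbitSum n ζ ((U ^ j) g) = ζ ^ j • U.twistedOrbitSum n ζ g := by
  have hcomm : Commute (U ^ j) (U.twistedOrbitSum n ζ) :=
    Commute.sum_right _ _ _ fun i _ => ((Commute.pow_pow_self U j i).smul_right _)
  rw [← mul_apply, ← hcomm.eq, mul_apply,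
    pow_apply_of_mem_eigenspace (twistedOrbitSum_mem_eigenspace hU hζ g)]

theorem span_orbit_inf_eigenspace (hn : (n : K) ≠ 0) (hU : U ^ n = 1) (hζ : ζ ^ n = 1)
    (g : ι → W) :
    Submodule.span K (Set.range fun p : ι × Fin n => (U ^ (p.2 : ℕ)) (g p.1)) ⊓ U.eigenspace ζ =
      Submodule.span K (Set.range fun i => U.twistedOrbitSum n ζ (g i)) := by
  apply le_antisymm
  · rintro f ⟨hfV, hfE⟩
    have hS : Submodule.span K (Set.range fun p : ι × Fin n => (U ^ (p.2 : ℕ)) (g p.1)) ≤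
        (Submodule.span K (Set.range fun i => U.twistedOrbitSum n ζ (g i))).comap
          (U.twistedOrbitSum n ζ) := by
      rw [Submodule.span_le]
      rintro _ ⟨⟨i, j⟩, rfl⟩
      rw [SetLike.mem_coe, Submodule.mem_comap, twistedOrbitSum_pow_apply hU hζ]
      exact Submodule.smul_mem _ _ (Submodule.subset_span ⟨i, rfl⟩)
    have := Submodule.smul_mem _ (n : K)⁻¹ (Submodule.mem_comap.1 (hS hfV))
    rwa [twistedOrbitSum_apply_of_mem_eigenspace hζ hfE, smul_smul, inv_mul_cancel₀ hn,
      one_smul] at this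
  · rw [Submodule.span_le]
    rintro _ ⟨i, rfl⟩
    refine ⟨?_, twistedOrbitSum_mem_eigenspace hU hζ _⟩
    simp only [twistedOrbitSum, LinearMap.sum_apply, LinearMap.smul_apply]
    exact Submodule.sum_mem _ fun j hj => Submodule.smul_mem _ _
      (Submodule.subset_span ⟨(i, ⟨j, mem_range.1 hj⟩), rfl⟩)

end Module.End

namespace List

variable {α : Type*} [LinearOrder α] {l : List α}

lemma Pairwise.le_getElem_iff_countP_le (hl : l.Pairwise (· ≤ ·)) {i : ℕ} (hi : i < l.length)
    (c : α) : c ≤ l[i] ↔ l.countP (· < c) ≤ i := by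
  have hmono {s t : ℕ} (hs : s < l.length) (ht : t < l.length) (hst : s ≤ t) : l[s] ≤ l[t] :=
    hl.rel_get_of_le (a := ⟨s, hs⟩) (b := ⟨t, ht⟩) hst
  constructor
  · intro hc
    have hdrop : (l.drop i).countP (· < c) = 0 := by
      refine countP_eq_zero.2 fun a ha => ?_
      obtain ⟨t, ht, rfl⟩ := mem_iff_getElem.1 ha
      simpa using hc.trans (hmono hi (by simp at ht; omega) (by omega))
    have := (l.take i).countP_le_length (p := (· < c))
    rw [← take_append_drop i l, countP_append, hdrop]
    simp at this ⊢
    omega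
  · intro hcount
    by_contra! hc
    have htake : (l.take (i + 1)).countP (· < c) = i + 1 := by
      rw [countP_eq_length.2 fun a ha => ?_, length_take]
      · omega
      obtain ⟨t, ht, rfl⟩ := mem_iff_getElem.1 ha
      simpa using (hmono (by simp at ht; omega) hi (by simp at ht; omega)).trans_lt hc
    have := (take_sublist (i + 1) l).countP_le (p := (· < c))
    omega

end List

namespace Multiset

variable {α : Type*} [LinearOrder α]

/-- Counts from `0` (`gst n k (i + 1)` reads `orderStat i`) and is `0` when `card s ≤ i`. -/
def orderStat [Zero α] (s : Multiset α) (i : ℕ) : α := (s.sort (· ≤ ·)).getD i 0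

lemma le_orderStat_iff_countP_le [Zero α] {s : Multiset α} {i : ℕ} (hi : i < card s) (c : α) :
    c ≤ s.orderStat i ↔ s.countP (· < c) ≤ i := by
  have hlen : i < (s.sort (· ≤ ·)).length := by simpa using hi
  rw [orderStat, List.getD_eq_getElem _ _ hlen,
    (pairwise_sort _ _).le_getElem_iff_countP_le hlen, ← coe_countP, sort_eq]

lemma sort_replicate_add_replicate {a b : α} (hab : a ≤ b) (p q : ℕ) :
    (replicate p a + replicate q b).sort (· ≤ ·) = List.replicate p a ++ List.replicate q b := by
  rw [← coe_replicate, ← coe_replicate, coe_add, coe_sort]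
  refine List.mergeSort_eq_self _ (List.pairwise_append.2 ⟨?_, ?_, ?_⟩)
  · exact List.pairwise_replicate.2 (Or.inr le_rfl)
  · exact List.pairwise_replicate.2 (Or.inr le_rfl)
  · intro u hu v hv
    rw [List.eq_of_mem_replicate hu, List.eq_of_mem_replicate hv]
    simpa using hab

lemma orderStat_replicate_add_replicate [Zero α] {a b : α} (hab : a ≤ b) {p q i : ℕ}
    (hi : i < p + q) : (replicate p a + replicate q b).orderStat i = if i < p then a else b := by
  rw [orderStat, sort_replicate_add_replicate hab]
  split_ifs with h
  · rw [List.getD_append _ _ _ _ (by simpa), List.getD_replicate _ h]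
  · rw [List.getD_append_right _ _ _ _ (by simpa using h), List.getD_replicate _ (by simp; omega)]

end Multiset

namespace Fin

variable {n : ℕ} [NeZero n]

lemma val_orderStat_eq_card {s : Multiset (Fin n)} {i : ℕ} (hi : i < s.card) :
    (s.orderStat i : ℕ) = #{c : Fin n | c ≠ 0 ∧ s.countP (· < c) ≤ i} := by
  have : ({c : Fin n | c ≠ 0 ∧ s.countP (· < c) ≤ i} : Finset (Fin n)) = Ioc 0 (s.orderStat i) := by
    ext c
    rw [mem_filter, mem_Ioc, pos_iff_ne_zero, Multiset.le_orderStat_iff_countP_le hi]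
    simp
  simp [this]

lemma sub_lt_neg_iff {w c : Fin n} (hc : c ≠ 0) : w - c < -c ↔ c ≤ w := by
  rw [lt_def, val_neg, if_neg hc]
  rcases le_or_gt c w with h | h
  · simp only [h, iff_true, sub_val_of_le h]
    omega
  · simp only [h.not_ge, iff_false, coe_sub_iff_lt.2 h]
    omega

lemma countP_map_add_sub_lt_neg_add_countP (x : Multiset (Fin n)) (t : Fin n) {c : Fin n}
    (hc : c ≠ 0) :
    (x.map (· + (t - c))).countP (· < -c) + (x.map (· + t)).countP (· < c) = x.card := by
  simp only [Multiset.countP_map, ← add_sub_assoc, sub_lt_neg_iff hc, ← not_lt]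
  rw [add_comm, ← Multiset.countP_eq_card_filter, ← Multiset.countP_eq_card_filter]
  exact (Multiset.card_eq_countP_add_countP (· + t < c) x).symm

lemma sum_val_orderStat_map_add_add_sum (x : Multiset (Fin n)) {i : ℕ} (hi : i < x.card) :
    ∑ t : Fin n, ((x.map (· + t)).orderStat i : ℕ) +
      ∑ t : Fin n, ((x.map (· + t)).orderStat (x.card - 1 - i) : ℕ) = n * (n - 1) := by
  let N (p : Fin n × Fin n) : ℕ := (x.map (· + p.1)).countP (· < p.2)
  have hsum (j : ℕ) (hj : j < x.card) : ∑ t : Fin n, ((x.map (· + t)).orderStat j : ℕ) =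
      ∑ p : Fin n × Fin n, if p.2 ≠ 0 ∧ N p ≤ j then 1 else 0 := by
    rw [Fintype.sum_prod_type]
    refine sum_congr rfl fun t _ => ?_
    rw [val_orderStat_eq_card (by simpa using hj), card_filter]
  -- `e` exchanges the arc `[-t, -t + c)` with its complement `[-t + c, -t + n)`
  let e : Equiv.Perm (Fin n × Fin n) :=
    Function.Involutive.toPerm (fun p => (p.1 - p.2, -p.2)) fun p => by simp
  rw [hsum i hi, hsum _ (by omega), ← Equiv.sum_comp e, ← sum_add_distrib]
  calc _ = ∑ p : Fin n × Fin n, if p.2 ≠ 0 then 1 else 0 := by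
        refine sum_congr rfl fun p _ => ?_
        by_cases hp : p.2 = 0
        · simp [show (e p).2 = -p.2 from rfl, hp]
        have hcompl : N (e p) + N p = x.card := countP_map_add_sub_lt_neg_add_countP x p.1 hp
        have hle : N p ≤ x.card := (Multiset.countP_le_card _ _).trans_eq (by simp)
        simp only [show (e p).2 = -p.2 from rfl, ne_eq, neg_eq_zero, hp, not_false_eq_true,
          true_and, if_true]
        split_ifs <;> omega
    _ = n * (n - 1) := by
        have : ({p | p.2 ≠ 0} : Finset (Fin n × Fin n)) = univ ×ˢ univ.erase 0 := by ext; simp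
        rw [Finset.sum_boole, this, card_product, card_erase_of_mem (mem_univ _)]
        simp

end Fin

section

variable {n k : ℕ} [NeZero n]

lemma gst_succ (i : ℕ) (x : XX n k) : gst n k (i + 1) x = (x.1.orderStat i : ℕ) := rfl

lemma Tk_iterate_val (j : ℕ) (x : XX n k) : ((Tk n k)^[j] x).1 = x.1.map (· + (j : Fin n)) := by
  induction j with
  | zero => simp
  | succ j ih =>
    rw [Function.iterate_succ_apply']
    change Multiset.map (· + 1) ((Tk n k)^[j] x).1 = _
    rw [ih, Multiset.map_map]
    congr 1
    ext v
    simp [add_assoc]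

lemma Tk_iterate_n : (Tk n k)^[n] = id := by
  funext x
  exact Subtype.ext (by simp [Tk_iterate_val])

lemma Ubig_pow_apply (j : ℕ) (f : XX n k → ℂ) : (Ubig n k ^ j) f = f ∘ (Tk n k)^[j] := by
  induction j generalizing f with
  | zero => rfl
  | succ j ih => rw [pow_succ', Module.End.mul_apply, ih, Function.iterate_succ]; rfl

lemma Ubig_pow_n : Ubig n k ^ n = 1 := by
  ext f : 1
  rw [Ubig_pow_apply, Tk_iterate_n]
  rfl

lemma Vspan_eq_span_orbit : Vspan n k = Submodule.span ℂ
    (Set.range fun p : Fin k × Fin n => (Ubig n k ^ (p.2 : ℕ)) (gst n k (p.1.val + 1))) := by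
  simp only [Vspan, Ubig_pow_apply]
  congr 1
  ext f
  simp [eq_comm, Function.comp_def]

noncomputable def orbitEigenfunction (n k : ℕ) [NeZero n] (ζ : ℂ) (i : Fin k) : XX n k → ℂ :=
  (Ubig n k).twistedOrbitSum n ζ (gst n k (i.val + 1))

lemma orbitEigenfunction_apply (ζ : ℂ) (i : Fin k) (x : XX n k) :
    orbitEigenfunction n k ζ i x =
      ∑ j ∈ range n, ζ⁻¹ ^ j * gst n k (i.val + 1) ((Tk n k)^[j] x) := by
  simp [orbitEigenfunction, Module.End.twistedOrbitSum, LinearMap.sum_apply, Ubig_pow_apply]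

lemma Vspan_inf_eigenspace {ζ : ℂ} (hζ : ζ ^ n = 1) :
    Vspan n k ⊓ (Ubig n k).eigenspace ζ =
      Submodule.span ℂ (Set.range (orbitEigenfunction n k ζ)) := by
  rw [Vspan_eq_span_orbit]
  exact Module.End.span_orbit_inf_eigenspace (Nat.cast_ne_zero.2 (NeZero.ne n)) Ubig_pow_n hζ
    (fun i : Fin k => gst n k (i.val + 1))

lemma orbitEigenfunction_one_apply (i : Fin k) (x : XX n k) :
    orbitEigenfunction n k 1 i x =
      ((∑ t : Fin n, ((x.1.map (· + t)).orderStat i : ℕ) : ℕ) : ℂ) := by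
  rw [orbitEigenfunction_apply, ← Fin.sum_univ_eq_sum_range]
  push_cast
  simp [gst_succ, Tk_iterate_val]

lemma orbitEigenfunction_one_add_rev (i : Fin k) :
    orbitEigenfunction n k 1 i + orbitEigenfunction n k 1 i.rev =
      ((n * (n - 1) : ℕ) : ℂ) • (1 : XX n k → ℂ) := by
  funext x
  have := Fin.sum_val_orderStat_map_add_add_sum x.1 (i := i) (by simp [x.2])
  rw [x.2, show k - 1 - i = i.rev by simp; omega] at this
  simp [orbitEigenfunction_one_apply, ← this]

def testConfig (n k : ℕ) [NeZero n] (m : Fin (k + 1)) : XX n k :=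
  ⟨Multiset.replicate (k - m) 0 + Multiset.replicate m 1, by simp; omega⟩

lemma Tk_iterate_testConfig_val (m : Fin (k + 1)) (j : ℕ) :
    ((Tk n k)^[j] (testConfig n k m)).1 =
      Multiset.replicate (k - m) (j : Fin n) + Multiset.replicate m ((j : Fin n) + 1) := by
  simp [Tk_iterate_val, testConfig, Multiset.map_replicate, add_comm]

lemma gst_Tk_iterate_testConfig (m : Fin (k + 1)) (i : Fin k) {j : ℕ} (hj : j < n) :
    gst n k (i.val + 1) ((Tk n k)^[j] (testConfig n k m)) =
      if j + 1 = n then (if i.val < m then 0 else ((n - 1 : ℕ) : ℂ))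
      else (if i.val < k - m then (j : ℂ) else (j + 1 : ℕ)) := by
  have hj' : ((j : Fin n) : ℕ) = j := by rw [Fin.val_natCast, Nat.mod_eq_of_lt hj]
  rw [gst_succ, Tk_iterate_testConfig_val]
  by_cases hjn : j + 1 = n
  · have hwrap : (j : Fin n) + 1 = 0 := by
      rw [← Nat.cast_one, ← Nat.cast_add, hjn, Fin.natCast_self]
    rw [if_pos hjn, hwrap, add_comm,
      Multiset.orderStat_replicate_add_replicate (Fin.zero_le _) (by omega)]
    split_ifs
    · simp
    · simp [show j = n - 1 by omega]
  · have hval : ((j : Fin n) + 1 : Fin n).val = j + 1 := by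
      rw [← Nat.cast_one, ← Nat.cast_add, Fin.val_natCast, Nat.mod_eq_of_lt (by omega)]
    rw [if_neg hjn,
      Multiset.orderStat_replicate_add_replicate (by simp [Fin.le_def, hval, hj']) (by omega)]
    split_ifs
    · simp [hj']
    · simp [hval]

lemma gst_Tk_iterate_testConfig_succ_sub (i m : Fin k) {j : ℕ} (hj : j < n) :
    gst n k (i.val + 1) ((Tk n k)^[j] (testConfig n k m.succ)) -
        gst n k (i.val + 1) ((Tk n k)^[j] (testConfig n k m.castSucc)) =
      if j + 1 = n then -((n : ℂ) - 1) * (if i = m then 1 else 0)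
      else (if i = m.rev then 1 else 0) := by
  rw [gst_Tk_iterate_testConfig _ _ hj, gst_Tk_iterate_testConfig _ _ hj]
  simp only [Fin.val_succ, Fin.val_castSucc, Fin.ext_iff, Fin.val_rev]
  by_cases hjn : j + 1 = n
  · simp only [if_pos hjn]
    split_ifs <;> first | omega | push_cast [Nat.cast_sub (NeZero.one_le (n := n))]; ring
  · simp only [if_neg hjn]
    split_ifs <;> first | omega | push_cast; ring

def testDiff (n k : ℕ) [NeZero n] (m : Fin k) : (XX n k → ℂ) →ₗ[ℂ] ℂ :=
  LinearMap.proj (R := ℂ) (φ := fun _ => ℂ) (testConfig n k m.succ) -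
    LinearMap.proj (testConfig n k m.castSucc)

lemma testDiff_orbitEigenfunction {ζ : ℂ} (hζ : ζ ^ n = 1) (i m : Fin k) :
    testDiff n k m (orbitEigenfunction n k ζ i) =
      (∑ j ∈ range n, ζ⁻¹ ^ j) * (if i = m.rev then 1 else 0)
        - ζ * ((if i = m.rev then 1 else 0) + ((n : ℂ) - 1) * (if i = m then 1 else 0)) := by
  have hlast : ζ⁻¹ ^ (n - 1) = ζ := by
    have hζ0 : ζ ≠ 0 := by rintro rfl; simp [NeZero.ne n] at hζ
    rw [inv_pow, ← mul_eq_one_iff_inv_eq₀ (pow_ne_zero _ hζ0), ← pow_succ,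
      Nat.sub_add_cancel NeZero.one_le, hζ]
  have hterm (j : ℕ) (hj : j ∈ range n) :
      ζ⁻¹ ^ j * gst n k (i.val + 1) ((Tk n k)^[j] (testConfig n k m.succ)) -
          ζ⁻¹ ^ j * gst n k (i.val + 1) ((Tk n k)^[j] (testConfig n k m.castSucc)) =
        ζ⁻¹ ^ j * (if i = m.rev then 1 else 0) + if j = n - 1 then
          ζ⁻¹ ^ j * (-((n : ℂ) - 1) * (if i = m then 1 else 0) - (if i = m.rev then 1 else 0))
        else 0 := by
    have hj := mem_range.1 hj
    rw [← mul_sub, gst_Tk_iterate_testConfig_succ_sub i m hj]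
    split_ifs <;> first | omega | ring
  simp only [testDiff, LinearMap.sub_apply, LinearMap.proj_apply, orbitEigenfunction_apply]
  rw [← sum_sub_distrib, sum_congr rfl hterm, sum_add_distrib, sum_ite_eq',
    if_pos (mem_range.2 (Nat.sub_lt (Nat.pos_of_neZero n) one_pos)), ← sum_mul, hlast]
  ring

lemma testDiff_sum_smul_orbitEigenfunction {ζ : ℂ} (hζ : ζ ^ n = 1) (hζ1 : ζ ≠ 1) (c : Fin k → ℂ)
    (m : Fin k) :
    testDiff n k m (∑ i, c i • orbitEigenfunction n k ζ i) =
      -ζ * (c m.rev + ((n : ℂ) - 1) * c m) := by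
  have hgeom : ∑ j ∈ range n, ζ⁻¹ ^ j = 0 := by
    rw [geom_sum_eq (inv_ne_one.2 hζ1), inv_pow, hζ, inv_one, sub_self, zero_div]
  simp only [map_sum, map_smul, testDiff_orbitEigenfunction hζ, hgeom, smul_eq_mul]
  simp [mul_add, sum_add_distrib, ← mul_assoc]
  ring

theorem linearIndependent_orbitEigenfunction (hn : n ≠ 2) {ζ : ℂ} (hζ : ζ ^ n = 1)
    (hζ1 : ζ ≠ 1) :
    LinearIndependent ℂ (orbitEigenfunction n k ζ) := by
  have hζ0 : ζ ≠ 0 := by rintro rfl; simp [NeZero.ne n] at hζ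
  refine Fintype.linearIndependent_iff.2 fun c hc m => ?_
  have hrel (m : Fin k) : c m.rev + ((n : ℂ) - 1) * c m = 0 := by
    have := testDiff_sum_smul_orbitEigenfunction hζ hζ1 c m
    rw [hc, map_zero, eq_comm, mul_eq_zero] at this
    exact this.resolve_left (neg_ne_zero.2 hζ0)
  have h₁ := hrel m
  have h₂ := hrel m.rev
  rw [Fin.rev_rev] at h₂
  have hn' : (n : ℂ) * ((n : ℂ) - 2) ≠ 0 := by
    refine mul_ne_zero (by exact_mod_cast (NeZero.ne n)) (sub_ne_zero.2 ?_)
    exact_mod_cast hn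
  have : (n : ℂ) * ((n : ℂ) - 2) * c m = 0 := by linear_combination ((n : ℂ) - 1) * h₁ - h₂
  exact (mul_eq_zero.1 this).resolve_left hn'

noncomputable def invariantBasis (n k : ℕ) [NeZero n] : Option (Fin (k / 2)) → XX n k → ℂ
  | none => 1
  | some j => orbitEigenfunction n k 1 (Fin.castLE (Nat.div_le_self k 2) j)

lemma testDiff_orbitEigenfunction_one (i m : Fin k) :
    testDiff n k m (orbitEigenfunction n k 1 i) =
      ((n : ℂ) - 1) * ((if i = m.rev then 1 else 0) - (if i = m then 1 else 0)) := by
  rw [testDiff_orbitEigenfunction (one_pow n)]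
  simp only [inv_one, one_pow, sum_const, card_range, nsmul_eq_mul, mul_one, one_mul]
  ring

theorem linearIndependent_invariantBasis (hn : 1 < n) :
    LinearIndependent ℂ (invariantBasis n k) := by
  refine Fintype.linearIndependent_iff.2 fun c hc => ?_
  rw [Fintype.sum_option] at hc
  have hsome (m : Fin (k / 2)) : c (some m) = 0 := by
    have hrev (j : Fin (k / 2)) : Fin.castLE (Nat.div_le_self k 2) j ≠
        (Fin.castLE (Nat.div_le_self k 2) m).rev := by
      simp only [ne_eq, Fin.ext_iff, Fin.val_castLE, Fin.val_rev]
      omega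
    have := congrArg (testDiff n k (Fin.castLE (Nat.div_le_self k 2) m)) hc
    have hone : testDiff n k (Fin.castLE (Nat.div_le_self k 2) m) 1 = 0 := by simp [testDiff]
    simp only [map_add, map_sum, map_smul, map_zero, invariantBasis, hone,
      testDiff_orbitEigenfunction_one, hrev, if_false, Fin.castLE_inj] at this
    have hn1 : (n : ℂ) - 1 ≠ 0 := sub_ne_zero.2 (by exact_mod_cast (by omega : n ≠ 1))
    simpa [hn1] using this
  have hnone : c none = 0 := by
    have := congrFun hc (testConfig n k 0)
    simpa [invariantBasis, hsome] using this
  rintro (_ | m)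
  exacts [hnone, hsome m]

theorem span_orbitEigenfunction_one (hn : 1 < n) (hk : 0 < k) :
    Submodule.span ℂ (Set.range (orbitEigenfunction n k 1)) =
      Submodule.span ℂ (Set.range (invariantBasis n k)) := by
  set c : ℂ := ((n * (n - 1) : ℕ) : ℂ)
  have hc : c ≠ 0 := Nat.cast_ne_zero.2 (mul_ne_zero (by omega) (by omega))
  apply le_antisymm
  · rw [Submodule.span_le]
    rintro _ ⟨i, rfl⟩
    have hone : (1 : XX n k → ℂ) ∈ Submodule.span ℂ (Set.range (invariantBasis n k)) :=
      Submodule.subset_span ⟨none, rfl⟩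
    have hlow (i : Fin k) (hi : i.val < k / 2) : orbitEigenfunction n k 1 i ∈
        Submodule.span ℂ (Set.range (invariantBasis n k)) :=
      Submodule.subset_span ⟨some ⟨i, hi⟩, rfl⟩
    have hpair := orbitEigenfunction_one_add_rev (n := n) i
    rcases lt_or_ge i.val (k / 2) with hi | hi
    · exact hlow i hi
    rcases lt_or_ge i.rev.val (k / 2) with hi' | hi'
    · rw [eq_sub_of_add_eq hpair]
      exact Submodule.sub_mem _ (Submodule.smul_mem _ _ hone) (hlow _ hi')
    · have hmid : i.rev = i := by
        rw [Fin.val_rev] at hi'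
        ext
        rw [Fin.val_rev]
        omega
      rw [hmid, ← two_smul ℂ, ← eq_inv_smul_iff₀ two_ne_zero] at hpair
      rw [hpair, smul_smul]
      exact Submodule.smul_mem _ _ hone
  · rw [Submodule.span_le]
    rintro _ ⟨_ | j, rfl⟩
    · have hpair := orbitEigenfunction_one_add_rev (n := n) ⟨0, hk⟩
      rw [← inv_smul_eq_iff₀ hc] at hpair
      simp only [invariantBasis, SetLike.mem_coe, ← hpair]
      exact Submodule.smul_mem _ _ (Submodule.add_mem _ (Submodule.subset_span ⟨_, rfl⟩)
        (Submodule.subset_span ⟨_, rfl⟩))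
    · exact Submodule.subset_span ⟨_, rfl⟩

end

theorem stmt_17 (n k : ℕ) [NeZero n] (hn : 2 < n) (hk : 2 ≤ k) :
    (∀ ζ : ℂ, ζ ^ n = 1 → ζ ≠ 1 →
        Module.finrank ℂ ↥(Vspan n k ⊓ Module.End.eigenspace (Ubig n k) ζ) = k) ∧
      Module.finrank ℂ ↥(Vspan n k ⊓ Module.End.eigenspace (Ubig n k) 1) = k / 2 + 1 := by
  refine ⟨fun ζ hζ hζ1 => ?_, ?_⟩
  · rw [Vspan_inf_eigenspace hζ,
      finrank_span_eq_card (linearIndependent_orbitEigenfunction hn.ne' hζ hζ1), Fintype.card_fin]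
  · rw [Vspan_inf_eigenspace (one_pow n), span_orbitEigenfunction_one (by omega) (by omega),
      finrank_span_eq_card (linearIndependent_invariantBasis (by omega)), Fintype.card_option,
      Fintype.card_fin]
end
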